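/- arXiv:1508.03890 — 3 statements merged into one kernel-verified Lean document; each statement's English description precedes it below -/
import Mathlib

section
/- Let b_n ∈ [0,1) satisfy n·b_n = ln n + β_n with |β_n| = o(ln n) and β_n → −∞. Then for any fixed constant a ∈ (0,1], the quantity a·n·(1−b_n)^{n−1} tends to infinity as n → ∞. -/
/-! Since `log (1 - x) ≥ -x / (1 - x)` and `n b_n = log n + β_n`,
`log (n (1 - b_n)^(n-1)) ≥ log n - n b_n / (1 - b_n) = (-β_n - b_n log n) / (1 - b_n)`,
which is at least `-β_n - b_n log n` once that is nonnegative. Finally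
`b_n log n = (1 + β_n / log n) (log n)² / n → 0` while `-β_n → ∞`. -/

open Filter Real Topology

lemma tendsto_log_mul_log_div_natCast_atTop :
    Tendsto (fun n : ℕ => log n * log n / n) atTop (𝓝 0) := by
  simpa [Function.comp_def, sq] using
    (tendsto_pow_log_div_mul_add_atTop 1 0 2 one_ne_zero).comp tendsto_natCast_atTop_atTop

lemma tendsto_mul_log_of_tendsto_div_log {β b : ℕ → ℝ}
    (hb : ∀ n, b n = (log n + β n) / n)
    (hβ : Tendsto (fun n => β n / log n) atTop (𝓝 0)) :
    Tendsto (fun n => b n * log n) atTop (𝓝 0) := by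
  have h := (tendsto_const_nhds (x := (1 : ℝ)).add hβ).mul tendsto_log_mul_log_div_natCast_atTop
  rw [add_zero, mul_zero] at h
  refine h.congr' ?_
  filter_upwards [eventually_gt_atTop 1] with n hn
  have hlog : log n ≠ 0 := (log_pos (by exact_mod_cast hn)).ne'
  rw [hb n]
  field_simp

lemma exp_neg_mul_div_one_sub_le_one_sub_pow {x : ℝ} (hx0 : 0 ≤ x) (hx1 : x < 1) (n : ℕ) :
    exp (-(n * x / (1 - x))) ≤ (1 - x) ^ (n - 1) := by
  have hpos : 0 < 1 - x := by linarith
  have hlog : -(x / (1 - x)) ≤ log (1 - x) := by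
    have h := one_sub_inv_le_log_of_pos hpos
    rwa [show 1 - (1 - x)⁻¹ = -(x / (1 - x)) by field_simp; ring] at h
  calc exp (-(n * x / (1 - x))) ≤ exp (n * log (1 - x)) := by
        rw [exp_le_exp, mul_div_assoc, ← mul_neg]
        exact mul_le_mul_of_nonneg_left hlog n.cast_nonneg
    _ = (1 - x) ^ n := by rw [exp_nat_mul, exp_log hpos]
    _ ≤ (1 - x) ^ (n - 1) := pow_le_pow_of_le_one hpos.le (by linarith) (n.sub_le 1)

lemma exp_neg_sub_mul_log_le_mul_one_sub_pow {x c : ℝ} {n : ℕ} (hn : 0 < n)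
    (hx0 : 0 ≤ x) (hx1 : x < 1) (hnx : n * x = log n + c) (hgap : 0 ≤ -c - x * log n) :
    exp (-c - x * log n) ≤ n * (1 - x) ^ (n - 1) := by
  have hn' : (0 : ℝ) < n := by exact_mod_cast hn
  have hpos : 0 < 1 - x := by linarith
  have key : -c - x * log n ≤ log n - n * x / (1 - x) := by
    rw [hnx, le_sub_comm, div_le_iff₀ hpos]
    nlinarith
  calc exp (-c - x * log n) ≤ exp (log n - n * x / (1 - x)) := exp_le_exp.2 key
    _ = n * exp (-(n * x / (1 - x))) := by rw [sub_eq_add_neg, exp_add, exp_log hn']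
    _ ≤ n * (1 - x) ^ (n - 1) := by
        gcongr
        exact exp_neg_mul_div_one_sub_le_one_sub_pow hx0 hx1 n

theorem stmt_6_general (β b : ℕ → ℝ) (hb : ∀ n, b n = (Real.log n + β n) / n)
    (hrange : ∀ n, b n ∈ Set.Ico (0 : ℝ) 1)
    (hβ : Tendsto (fun (n : ℕ) => β n / Real.log n) atTop (nhds 0))
    (hbot : Tendsto β atTop atBot)
    (a : ℝ) (ha0 : 0 < a) :
    Tendsto (fun (n : ℕ) => a * (n : ℝ) * (1 - b n) ^ (n - 1)) atTop atTop := by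
  have hgap : Tendsto (fun n => -β n - b n * log n) atTop atTop := by
    simpa [sub_eq_add_neg] using (tendsto_neg_atBot_atTop.comp hbot).atTop_add
      (tendsto_mul_log_of_tendsto_div_log hb hβ).neg
  refine tendsto_atTop_mono' _ ?_ ((tendsto_exp_atTop.comp hgap).const_mul_atTop ha0)
  filter_upwards [eventually_gt_atTop 0, hgap.eventually_ge_atTop 0] with n hn hgapn
  have hnb : n * b n = log n + β n := by
    rw [hb n, mul_div_cancel₀ _ (by positivity)]
  rw [mul_assoc]
  exact mul_le_mul_of_nonneg_left (exp_neg_sub_mul_log_le_mul_one_sub_pow hn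
    (hrange n).1 (hrange n).2 hnb hgapn) ha0.le

/-- If `b n = (ln n + β n)/n ∈ [0,1)` with `|β n| = o(ln n)` and `β n → -∞`,
then for any constant `a ∈ (0,1]`, `a·n·(1 - b n)^{n-1} → ∞`. -/
theorem stmt_6 (β b : ℕ → ℝ) (hb : ∀ n, b n = (Real.log n + β n) / n)
    (hrange : ∀ n, b n ∈ Set.Ico (0 : ℝ) 1)
    (hβ : Tendsto (fun (n : ℕ) => β n / Real.log n) atTop (nhds 0))
    (hbot : Tendsto β atTop atBot)
    (a : ℝ) (ha0 : 0 < a) (ha1 : a ≤ 1) :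
    Tendsto (fun (n : ℕ) => a * (n : ℝ) * (1 - b n) ^ (n - 1)) atTop atTop :=
  stmt_6_general β b hb hrange hβ hbot a ha0
end

section
/- In the general random intersection graph G(n, a⃗, K⃗, P), the unconditional probability that a fixed vertex v₁ is isolated equals Σ_{i=1}^m a_i (1 − b_i)^{n−1}, where b_i = Σ_{j=1}^m a_j (1 − C(P−K_i, K_j)/C(P, K_j)); in particular, if K_1 ≤ K_2 ≤ … ≤ K_m (so that b_1 ≤ b_i for all i), then this probability is at most (1 − b_1)^{n−1}. -/
/-!
The configuration weight is a product over vertices. Splitting off the configuration `x` of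
`v₁`, the other `n - 1` vertices contribute independently, each with total weight
`q(|x|) = disjointProb a K P |x| = ∑ₖ aₖ C(P - |x|, Kₖ) / C(P, Kₖ)`, the probability that a
random vertex misses a fixed `|x|`-set. Summing over `x` gives `∑ᵢ aᵢ q(Kᵢ)^(n-1)`, and
`q(Kᵢ) = 1 - bᵢ` because `∑ aⱼ = 1`. Since `q` is antitone and `K₁` is the smallest `Kᵢ`, every
`q(Kᵢ) ≤ q(K₁)`, and averaging with the weights `aᵢ` gives the bound.
-/

open Finset

attribute [local instance] Classical.propDecidable

/-- Probability weight of a configuration of the general random intersection graph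
`G(n, a⃗, K⃗, P)`. -/
noncomputable def cfgWeight (n m P : ℕ) (a : Fin m → ℝ) (K : Fin m → ℕ)
    (ω : Fin n → Fin m × Finset (Fin P)) : ℝ :=
  ∏ v : Fin n,
    (a (ω v).1 * if (ω v).2.card = K (ω v).1 then (1 : ℝ) / (P.choose (K (ω v).1) : ℝ) else 0)

theorem sum_ite_forall_ne_prod_eq {ι β R : Type*} [Fintype ι] [DecidableEq ι] [Fintype β]
    [CommSemiring R] (c : β → β → Prop) [DecidableRel c] (w : β → R) (i : ι) :
    ∑ ω : ι → β, (if ∀ j, j ≠ i → c (ω i) (ω j) then ∏ v, w (ω v) else 0) =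
      ∑ x, w x * (∑ y, if c x y then w y else 0) ^ (Fintype.card ι - 1) := by
  have hsplit : ∀ ω : ι → β, (if ∀ j, j ≠ i → c (ω i) (ω j) then ∏ v, w (ω v) else 0) =
      w (ω i) * ∏ j : {j // j ≠ i}, if c (ω i) (ω j) then w (ω j) else 0 := by
    intro ω
    rw [Fintype.prod_ite_zero, Fintype.prod_eq_mul_prod_subtype_ne _ i, mul_ite, mul_zero]
    simp only [Subtype.forall]
  simp_rw [hsplit, ← (Equiv.funSplitAt i β).symm.sum_comp, Fintype.sum_prod_type]
  refine sum_congr rfl fun x _ => ?_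
  have hcoord : ∀ (g : {j // j ≠ i} → β) (j : {j // j ≠ i}),
      (Equiv.funSplitAt i β).symm (x, g) j = g j :=
    fun g j => by simp only [Equiv.funSplitAt_symm_apply, j.2, ↓reduceDIte, Subtype.coe_eta]
  simp only [hcoord, Equiv.funSplitAt_symm_apply, dif_pos, ← mul_sum]
  rw [← Fintype.prod_sum fun _ y => if c x y then w y else 0, prod_const, card_univ]
  simp only [ne_eq, Fintype.card_subtype_compl, Fintype.card_unique]

theorem card_filter_disjoint_card_eq {α : Type*} [Fintype α] (S : Finset α) (r : ℕ)
    [DecidablePred fun T : Finset α => Disjoint S T ∧ #T = r] :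
    #{T : Finset α | Disjoint S T ∧ #T = r} = (Fintype.card α - #S).choose r := by
  have : ({T | Disjoint S T ∧ #T = r} : Finset (Finset α)) = powersetCard r Sᶜ := by
    ext T
    simp [mem_powersetCard, subset_compl_iff_disjoint_left]
  rw [this, card_powersetCard, card_compl]

section RandomIntersectionGraph

variable {m P : ℕ} (a : Fin m → ℝ) (K : Fin m → ℕ)

noncomputable def vertexWeight (x : Fin m × Finset (Fin P)) : ℝ :=
  a x.1 * if #x.2 = K x.1 then (1 : ℝ) / (P.choose (K x.1) : ℝ) else 0

theorem cfgWeight_eq_prod_vertexWeight {n : ℕ} (ω : Fin n → Fin m × Finset (Fin P)) :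
    cfgWeight n m P a K ω = ∏ v, vertexWeight a K (ω v) :=
  rfl

noncomputable def disjointProb (P : ℕ) (s : ℕ) : ℝ :=
  ∑ k, a k * (((P - s).choose (K k) : ℝ) / (P.choose (K k) : ℝ))

theorem sum_ite_disjoint_vertexWeight (S : Finset (Fin P)) :
    ∑ y : Fin m × Finset (Fin P), (if Disjoint S y.2 then vertexWeight a K y else 0) =
      disjointProb a K P #S := by
  rw [Fintype.sum_prod_type]
  refine sum_congr rfl fun k _ => ?_
  simp only [vertexWeight, mul_ite, mul_zero, ← ite_and, ← sum_filter, sum_const]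
  rw [card_filter_disjoint_card_eq, Fintype.card_fin, nsmul_eq_mul]
  ring

theorem sum_vertexWeight_mul (hK : ∀ i, K i ≤ P) (f : ℕ → ℝ) :
    ∑ x : Fin m × Finset (Fin P), vertexWeight a K x * f #x.2 = ∑ i, a i * f (K i) := by
  rw [Fintype.sum_prod_type]
  refine sum_congr rfl fun i _ => ?_
  have hC : (P.choose (K i) : ℝ) ≠ 0 := by exact_mod_cast (Nat.choose_pos (hK i)).ne'
  have hslice : ({S | #S = K i} : Finset (Finset (Fin P))) = powersetCard (K i) univ := by
    ext S
    simp
  simp only [vertexWeight, mul_ite, mul_zero, ite_mul, zero_mul]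
  rw [← sum_filter, sum_congr rfl fun S hS => by rw [(mem_filter.1 hS).2], sum_const, hslice,
    card_powersetCard, card_univ, Fintype.card_fin, nsmul_eq_mul]
  field_simp

theorem one_sub_sum_eq_disjointProb (hsum : ∑ j, a j = 1) (s : ℕ) :
    1 - ∑ j, a j * (1 - ((P - s).choose (K j) : ℝ) / (P.choose (K j) : ℝ)) =
      disjointProb a K P s := by
  simp only [disjointProb, mul_sub, mul_one, sum_sub_distrib, hsum, sub_sub_cancel]

variable {a}

theorem disjointProb_nonneg (ha : ∀ j, 0 ≤ a j) (s : ℕ) : 0 ≤ disjointProb a K P s :=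
  sum_nonneg fun j _ => mul_nonneg (ha j) (by positivity)

theorem disjointProb_antitone (ha : ∀ j, 0 ≤ a j) : Antitone (disjointProb a K P) :=
  fun _ _ hst => sum_le_sum fun j _ => by
    gcongr
    exact ha j

end RandomIntersectionGraph

theorem stmt_12_general (n m P : ℕ) (hn : 0 < n) (hm : 0 < m) (a : Fin m → ℝ)
    (ha : ∀ j, 0 < a j) (hsum : ∑ j, a j = 1)
    (K : Fin m → ℕ) (hKP : ∀ i j, K i + K j ≤ P)
    (hmono : ∀ i j : Fin m, i ≤ j → K i ≤ K j) :
    (∑ ω : Fin n → Fin m × Finset (Fin P),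
        if (∀ j : Fin n, j ≠ ⟨0, hn⟩ → Disjoint (ω ⟨0, hn⟩).2 (ω j).2)
        then cfgWeight n m P a K ω else 0) =
      (∑ i : Fin m, a i *
        (1 - ∑ j, a j * (1 - ((P - K i).choose (K j) : ℝ) / ((P.choose (K j)) : ℝ))) ^ (n - 1)) ∧
    (∑ ω : Fin n → Fin m × Finset (Fin P),
        if (∀ j : Fin n, j ≠ ⟨0, hn⟩ → Disjoint (ω ⟨0, hn⟩).2 (ω j).2)
        then cfgWeight n m P a K ω else 0) ≤
      (1 - ∑ j, a j *
        (1 - ((P - K ⟨0, hm⟩).choose (K j) : ℝ) / ((P.choose (K j)) : ℝ))) ^ (n - 1) := by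
  have hK : ∀ i, K i ≤ P := fun i => (Nat.le_add_left _ _).trans (hKP i i)
  have ha₀ : ∀ j, 0 ≤ a j := fun j => (ha j).le
  have hiso : (∑ ω : Fin n → Fin m × Finset (Fin P),
      if (∀ j : Fin n, j ≠ ⟨0, hn⟩ → Disjoint (ω ⟨0, hn⟩).2 (ω j).2)
      then cfgWeight n m P a K ω else 0) = ∑ i, a i * disjointProb a K P (K i) ^ (n - 1) := by
    have hfactor := sum_ite_forall_ne_prod_eq (fun x y : Fin m × Finset (Fin P) => Disjoint x.2 y.2)
      (vertexWeight a K) (⟨0, hn⟩ : Fin n)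
    simp only [sum_ite_disjoint_vertexWeight, Fintype.card_fin,
      sum_vertexWeight_mul a K hK fun s => disjointProb a K P s ^ (n - 1)] at hfactor
    simp only [cfgWeight_eq_prod_vertexWeight]
    -- the two sides differ only in their `Decidable` instances
    convert hfactor
  simp only [one_sub_sum_eq_disjointProb a K hsum, hiso, true_and]
  calc ∑ i, a i * disjointProb a K P (K i) ^ (n - 1)
      ≤ ∑ i, a i * disjointProb a K P (K ⟨0, hm⟩) ^ (n - 1) := by
        gcongr with i
        · exact ha₀ i
        · exact disjointProb_nonneg K ha₀ _
        · exact disjointProb_antitone K ha₀ (hmono _ _ (Fin.le_iff_val_le_val.2 (Nat.zero_le _)))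
    _ = disjointProb a K P (K ⟨0, hm⟩) ^ (n - 1) := by rw [← sum_mul, hsum, one_mul]

/-- The probability that a fixed vertex `v₁` is isolated in `G(n, a⃗, K⃗, P)` equals
`∑_i a_i (1 - b_i)^{n-1}` where `b_i = ∑_j a_j (1 - C(P-K_i, K_j)/C(P, K_j))`; and if
`K_1 ≤ K_2 ≤ … ≤ K_m`, this probability is at most `(1 - b_1)^{n-1}`. -/
theorem stmt_12 (n m P : ℕ) (hn : 0 < n) (hm : 0 < m) (a : Fin m → ℝ)
    (ha : ∀ j, 0 < a j) (hsum : ∑ j, a j = 1)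
    (K : Fin m → ℕ) (hK1 : ∀ j, 1 ≤ K j) (hKP : ∀ i j, K i + K j ≤ P)
    (hmono : ∀ i j : Fin m, i ≤ j → K i ≤ K j) :
    (∑ ω : Fin n → Fin m × Finset (Fin P),
        if (∀ j : Fin n, j ≠ ⟨0, hn⟩ → Disjoint (ω ⟨0, hn⟩).2 (ω j).2)
        then cfgWeight n m P a K ω else 0) =
      (∑ i : Fin m, a i *
        (1 - ∑ j, a j * (1 - ((P - K i).choose (K j) : ℝ) / ((P.choose (K j)) : ℝ))) ^ (n - 1)) ∧
    (∑ ω : Fin n → Fin m × Finset (Fin P),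
        if (∀ j : Fin n, j ≠ ⟨0, hn⟩ → Disjoint (ω ⟨0, hn⟩).2 (ω j).2)
        then cfgWeight n m P a K ω else 0) ≤
      (1 - ∑ j, a j *
        (1 - ((P - K ⟨0, hm⟩).choose (K j) : ℝ) / ((P.choose (K j)) : ℝ))) ^ (n - 1) :=
  stmt_12_general n m P hn hm a ha hsum K hKP hmono
end

section
/- For integers K, L, P with 2K + L ≤ P: C(P−2K, L)/C(P, L) ≤ (C(P−K, L)/C(P, L))², i.e., C(P−2K, L) · C(P, L) ≤ C(P−K, L)². -/
/-! Writing `C(n, L) = n(n-1)⋯(n-L+1) / L!`, the inequality splits into the factorwise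
inequalities `(m - 2K) m ≤ (m - K)²`, i.e. `(x - K)(x + K) ≤ x²` for `x = m - K`. -/

open Finset

theorem Nat.sub_two_mul_mul_le_sq (a b : ℕ) : (a - 2 * b) * a ≤ (a - b) ^ 2 := by
  rcases le_or_gt (2 * b) a with hb | hb
  · zify [hb, (by omega : b ≤ a)]
    nlinarith [sq_nonneg (b : ℤ)]
  · simp [Nat.sub_eq_zero_of_le hb.le]

theorem Nat.descFactorial_sub_two_mul_mul_le_sq (n k L : ℕ) :
    (n - 2 * k).descFactorial L * n.descFactorial L ≤ ((n - k).descFactorial L) ^ 2 := by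
  simp only [Nat.descFactorial_eq_prod_range, ← prod_mul_distrib, ← prod_pow]
  refine prod_le_prod' fun i _ => ?_
  have h₁ : n - 2 * k - i = (n - i) - 2 * k := by omega
  have h₂ : n - k - i = (n - i) - k := by omega
  rw [h₁, h₂]
  exact Nat.sub_two_mul_mul_le_sq (n - i) k

theorem Nat.choose_sub_two_mul_mul_le_sq (n k L : ℕ) :
    (n - 2 * k).choose L * n.choose L ≤ ((n - k).choose L) ^ 2 := by
  have h := Nat.descFactorial_sub_two_mul_mul_le_sq n k L
  simp only [Nat.descFactorial_eq_factorial_mul_choose] at h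
  refine Nat.le_of_mul_le_mul_left ?_ (Nat.mul_pos L.factorial_pos L.factorial_pos)
  linarith

theorem div_le_div_sq_of_mul_le_sq {α : Type*} [Field α] [LinearOrder α] [IsStrictOrderedRing α]
    {a b c : α} (h : a * c ≤ b ^ 2) : a / c ≤ (b / c) ^ 2 := by
  rcases eq_or_ne c 0 with rfl | hc
  · simp
  calc a / c = a * c / c ^ 2 := by field_simp
    _ ≤ b ^ 2 / c ^ 2 := by gcongr
    _ = (b / c) ^ 2 := (div_pow b c 2).symm

theorem stmt_14_general (K L P : ℕ) :
    (((P - 2 * K).choose L : ℝ)) / ((P.choose L : ℝ)) ≤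
      ((((P - K).choose L : ℝ)) / ((P.choose L : ℝ)))^2 ∧
    (P - 2 * K).choose L * P.choose L ≤ ((P - K).choose L)^2 := by
  have h := Nat.choose_sub_two_mul_mul_le_sq P K L
  exact ⟨div_le_div_sq_of_mul_le_sq (by exact_mod_cast h), h⟩

/-- For `2K + L ≤ P`: `C(P-2K, L)/C(P, L) ≤ (C(P-K, L)/C(P, L))²`, i.e.
`C(P-2K, L)·C(P, L) ≤ C(P-K, L)²`. -/
theorem stmt_14 (K L P : ℕ) (h : 2 * K + L ≤ P) :
    (((P - 2 * K).choose L : ℝ)) / ((P.choose L : ℝ)) ≤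
      ((((P - K).choose L : ℝ)) / ((P.choose L : ℝ)))^2 ∧
    (P - 2 * K).choose L * P.choose L ≤ ((P - K).choose L)^2 :=
  stmt_14_general K L P
end
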